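/- arXiv:2005.00911 — 5 statements merged into one kernel-verified Lean document; each statement's English description precedes it below -/
import Mathlib

section
/- In particular, there exist exactly Φ_q(x^n - 1) > 0 normal elements of F_{q^n} over F_q; in particular a normal element always exists. -/
open Polynomial
open scoped DirectSum

noncomputable section


/-- The action `g ∘ α = Σ aᵢ α^(qⁱ)` of `F_q[x]` on an extension of `F_q`. -/
def fqAct (F : Type*) [Field F] [Fintype F] {E : Type*} [Field E] [Algebra F E]
    (g : F[X]) (α : E) : E :=
  g.sum fun i a => algebraMap F E a * α ^ (Fintype.card F) ^ i

/-- `m` is the `F_q`-order of `α`: the monic generator of the annihilator of `α`. -/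
def IsFqOrder (F : Type*) [Field F] [Fintype F] {E : Type*} [Field E] [Algebra F E]
    (α : E) (m : F[X]) : Prop :=
  m.Monic ∧ fqAct F m α = 0 ∧ ∀ g : F[X], fqAct F g α = 0 → m ∣ g

/-- `m` is the `F_q`-order of the additive character `χ`: the monic generator of the ideal
of `g` with `g ∘ χ` trivial, where `(g ∘ χ) β = χ (g ∘ β)`. -/
def IsCharFqOrder (F : Type*) [Field F] [Fintype F] {E : Type*} [Field E] [Algebra F E]
    (χ : E → ℂ) (m : F[X]) : Prop :=
  m.Monic ∧ (∀ β : E, χ (fqAct F m β) = 1) ∧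
    ∀ g : F[X], (∀ β : E, χ (fqAct F g β) = 1) → m ∣ g

/-- The monic reciprocal `f*(x) = f(0)⁻¹ x^(deg f) f(1/x)` of a polynomial. -/
def monicRecip {K : Type*} [Field K] (f : K[X]) : K[X] :=
  C (f.coeff 0)⁻¹ * f.reverse

/-- The additive character `χ_a : β ↦ exp(2πi · Tr(aβ)/p)`. -/
def stdChar (p : ℕ) [Fact p.Prime] {E : Type*} [Field E] [Algebra (ZMod p) E]
    (a : E) : E → ℂ :=
  fun β => Complex.exp (2 * Real.pi * Complex.I *
    ((Algebra.trace (ZMod p) E (a * β)).val : ℂ) / p)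

/-- `β` is normal over `F_q`: its Frobenius conjugates form an `F_q`-basis. -/
def IsNormalElem (F : Type*) [Field F] [Fintype F] {E : Type*} [Field E] [Algebra F E]
    (β : E) : Prop :=
  LinearIndependent F (fun i : Fin (Module.finrank F E) => β ^ (Fintype.card F) ^ (i : ℕ)) ∧
  Submodule.span F (Set.range fun i : Fin (Module.finrank F E) => β ^ (Fintype.card F) ^ (i : ℕ)) = ⊤


/-- Frobenius `x ↦ x^q` as an `F`-linear endomorphism of `E`. -/
def frobLin (F : Type*) [Field F] [Fintype F] (E : Type*) [Field E] [Algebra F E] :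
    E →ₗ[F] E where
  toFun x := x ^ Fintype.card F
  map_add' x y := by
    obtain ⟨k, hp, hF⟩ := FiniteField.card F (ringChar F)
    haveI : Fact (ringChar F).Prime := ⟨hp⟩
    haveI : CharP E (ringChar F) :=
      charP_of_injective_algebraMap (algebraMap F E).injective _
    rw [hF]
    exact add_pow_char_pow x y (ringChar F) k
  map_smul' a x := by
    simp only [_root_.smul_pow, RingHom.id_apply, FiniteField.pow_card]

section Aux

variable {F : Type*} [Field F] [Fintype F] {E : Type*} [Field E] [Algebra F E]

lemma frobLin_pow_apply (i : ℕ) (α : E) :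
    ((frobLin F E ^ i) α) = α ^ (Fintype.card F) ^ i := by
  induction i generalizing α with
  | zero => simp
  | succ i ih =>
    rw [pow_succ, Module.End.mul_apply]
    rw [show (frobLin F E) α = α ^ Fintype.card F from rfl, ih, ← pow_mul, ← pow_succ']

lemma aeval_frobLin_mem_span (hn : 1 ≤ Module.finrank F E)
    (hfrob : frobLin F E ^ Module.finrank F E = 1) (g : F[X]) (β : E) :
    (aeval (frobLin F E) g) β ∈ Submodule.span F
      (Set.range fun i : Fin (Module.finrank F E) => β ^ (Fintype.card F) ^ (i : ℕ)) := by
  set n := Module.finrank F E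
  rw [aeval_eq_sum_range, LinearMap.sum_apply]
  refine Submodule.sum_mem _ fun i _ => ?_
  rw [LinearMap.smul_apply]
  refine Submodule.smul_mem _ _ ?_
  rw [pow_eq_pow_mod i hfrob, frobLin_pow_apply]
  exact Submodule.subset_span ⟨⟨i % n, Nat.mod_lt _ (by omega)⟩, rfl⟩

end Aux

universe u v

lemma exists_order_gen {R : Type u} [CommRing R] [IsDomain R] [IsPrincipalIdealRing R]
    {M : Type v} [AddCommGroup M] [Module R M] [Module.Finite R M]
    (htors : Module.IsTorsion R M) :
    ∃ x : M, ∀ g : R, g • x = 0 → ∀ y : M, g • y = 0 := by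
  haveI : Module.Finite R (ULift.{u} M) :=
    Module.Finite.equiv (ULift.moduleEquiv (R := R) (M := M)).symm
  have htors' : Module.IsTorsion R (ULift.{u} M) := by
    intro x
    obtain ⟨a, ha⟩ := @htors x.down
    refine ⟨a, ?_⟩
    apply ULift.down_injective
    simpa using ha
  obtain ⟨ι, hι, p, hp, e, ⟨eqv⟩⟩ :=
    Module.equiv_directSum_of_isTorsion (R := R) (M := ULift.{u} M) htors'
  haveI := hι
  classical
  set x₀ : ⨁ i : ι, R ⧸ Submodule.span R {p i ^ e i} :=
    ∑ i, DirectSum.of (fun i => R ⧸ Submodule.span R {p i ^ e i}) i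
      (Submodule.Quotient.mk 1) with hx₀'
  refine ⟨(eqv.symm x₀).down, ?_⟩
  intro g hg y
  have hg' : g • x₀ = 0 := by
    have h1 : g • eqv.symm x₀ = 0 := by
      apply ULift.down_injective
      simpa using hg
    have h2 := congrArg eqv h1
    rwa [map_smul, LinearEquiv.apply_symm_apply, map_zero] at h2
  have hcomp : ∀ j, g ∈ Submodule.span R {p j ^ e j} := by
    intro j
    have h1 := congrArg (fun z => z j) hg'
    simp only [DirectSum.smul_apply, DirectSum.zero_apply] at h1
    have h2 : x₀ j = Submodule.Quotient.mk 1 := by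
      rw [hx₀', DFinsupp.finset_sum_apply]
      rw [Finset.sum_eq_single j]
      · exact DirectSum.of_eq_same j _
      · intro i _ hij; exact DirectSum.of_eq_of_ne _ _ _ hij.symm
      · intro h; exact absurd (Finset.mem_univ j) h
    rw [h2, ← Submodule.Quotient.mk_smul, smul_eq_mul, mul_one] at h1
    exact (Submodule.Quotient.mk_eq_zero _).mp h1
  have hall : ∀ z : ⨁ i : ι, R ⧸ Submodule.span R {p i ^ e i}, g • z = 0 := by
    intro z
    refine DFinsupp.ext fun j => ?_
    rw [DirectSum.smul_apply, DirectSum.zero_apply]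
    obtain ⟨r, hr⟩ := Submodule.Quotient.mk_surjective _ (z j)
    rw [← hr, ← Submodule.Quotient.mk_smul, Submodule.Quotient.mk_eq_zero, smul_eq_mul]
    exact Ideal.mul_mem_right r _ (hcomp j)
  have h3 : g • (ULift.up y) = 0 := by
    have h4 := congrArg eqv.symm (hall (eqv (ULift.up y)))
    simpa using h4
  have h5 := congrArg ULift.down h3
  simpa using h5


set_option maxHeartbeats 2000000 in
theorem card_normal_eq_totient_pos
    (F : Type*) [Field F] [Fintype F] (E : Type*) [Field E] [Algebra F E]
    (n : ℕ) (hn : 1 ≤ n) (hrank : Module.finrank F E = n) :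
    Nat.card {β : E // IsNormalElem F β} =
      Nat.card (F[X] ⧸ Ideal.span {(X : F[X]) ^ n - 1})ˣ ∧
    0 < Nat.card (F[X] ⧸ Ideal.span {(X : F[X]) ^ n - 1})ˣ ∧
    ∃ β : E, IsNormalElem F β := by
  subst hrank
  classical
  set n := Module.finrank F E with hn'
  set q := Fintype.card F with hq'
  have hq : 1 < q := Fintype.one_lt_card
  haveI : FiniteDimensional F E := FiniteDimensional.of_finrank_pos (by omega)
  haveI : Finite E := Module.finite_of_finite F
  haveI : Fintype E := Fintype.ofFinite E
  have hcardE : Fintype.card E = q ^ n := Module.card_eq_pow_finrank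
  set φ := frobLin F E with hφ'
  -- φ^n = 1
  have hφn : φ ^ n = 1 := by
    ext α
    rw [frobLin_pow_apply, Module.End.one_apply, ← hcardE]
    exact FiniteField.pow_card α
  set m : F[X] := X ^ n - 1 with hm'
  have hmonic : m.Monic := by
    have := monic_X_pow_sub_C (1 : F) (n := n) (by omega)
    simpa using this
  have hm0 : m ≠ 0 := hmonic.ne_zero
  have hmdeg : m.natDegree = n := by
    have := natDegree_X_pow_sub_C (n := n) (r := (1 : F))
    simpa using this
  have haevalm : aeval φ m = 0 := by
    rw [hm', map_sub, map_one, aeval_X_pow, hφn, sub_self]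
  -- the annihilator property
  have hdvd : ∀ g : F[X], (∀ α : E, (aeval φ g) α = 0) → m ∣ g := by
    intro g hg
    rw [← modByMonic_eq_zero_iff_dvd hmonic]
    set r := g %ₘ m with hr'
    have hrz : ∀ α : E, (aeval φ r) α = 0 := by
      intro α
      have : g %ₘ m = g - m * (g /ₘ m) := by
        rw [eq_sub_iff_add_eq, modByMonic_add_div g m]
      rw [hr', this, map_sub, map_mul, haevalm, zero_mul, sub_zero]
      exact hg α
    by_contra hrne
    have hrdeg : r.natDegree < n := by
      have := degree_modByMonic_lt g hmonic
      rw [← hr'] at this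
      have h2 : r.degree < m.degree := this
      have := natDegree_lt_natDegree hrne h2
      omega
    -- build the polynomial over E
    set P : E[X] := ∑ i ∈ Finset.range (r.natDegree + 1),
      C (algebraMap F E (r.coeff i)) * X ^ q ^ i with hP'
    have hPeval : ∀ α : E, P.eval α = (aeval φ r) α := by
      intro α
      rw [hP', eval_finset_sum, aeval_eq_sum_range, LinearMap.sum_apply]
      refine Finset.sum_congr rfl fun i _ => ?_
      rw [eval_mul, eval_C, eval_pow, eval_X, LinearMap.smul_apply, frobLin_pow_apply,
        Algebra.smul_def]
    have hPcoeff : P.coeff (q ^ r.natDegree) = algebraMap F E (r.coeff r.natDegree) := by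
      rw [hP', finset_sum_coeff]
      rw [Finset.sum_eq_single r.natDegree]
      · simp [coeff_C_mul, coeff_X_pow]
      · intro i _ hi
        rw [coeff_C_mul, coeff_X_pow, if_neg, mul_zero]
        exact fun h => hi (Nat.pow_right_injective hq h).symm
      · intro h
        exact absurd (Finset.self_mem_range_succ _) h
    have hPne : P ≠ 0 := by
      intro h
      apply hrne
      have := hPcoeff
      rw [h, coeff_zero] at this
      have : r.coeff r.natDegree = 0 :=
        (algebraMap F E).injective (by simpa using this.symm)
      exact leadingCoeff_eq_zero.mp this
    have hPdeg : P.natDegree < Fintype.card E := by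
      have h1 : P.natDegree ≤ q ^ r.natDegree := by
        refine natDegree_sum_le_of_forall_le _ _ fun i hi => ?_
        refine le_trans (natDegree_C_mul_le _ _) ?_
        rw [natDegree_X_pow]
        exact Nat.pow_le_pow_right (by omega) (Nat.lt_succ_iff.mp (Finset.mem_range.mp hi))
      rw [hcardE]
      exact lt_of_le_of_lt h1 (Nat.pow_lt_pow_right hq hrdeg)
    exact hPne (Polynomial.eq_zero_of_natDegree_lt_card_of_eval_eq_zero P
      Function.injective_id (fun α => by rw [hPeval]; exact hrz α) (by simpa using hPdeg))
  -- the F[X]-module structure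
  set M := Module.AEval' φ with hM'
  set o : E ≃ₗ[F] M := Module.AEval'.of φ with ho'
  have hsmul : ∀ (g : F[X]) (x : M), g • x = o ((aeval φ g) (o.symm x)) := by
    intro g x
    have := Module.AEval.of_symm_smul φ g x
    apply o.symm.injective
    rw [this]
    simp [Module.End.smul_def]
    rfl
  have hmkill : ∀ x : M, m • x = 0 := by
    intro x
    rw [hsmul, haevalm]
    simp
  haveI : Module.Finite F[X] M := inferInstance
  have htors : Module.IsTorsion F[X] M := by
    intro x
    exact ⟨⟨m, mem_nonZeroDivisors_of_ne_zero hm0⟩, hmkill x⟩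
  obtain ⟨x₀, hx₀⟩ := exists_order_gen (R := F[X]) (M := M) htors
  have hx₀ann : ∀ g : F[X], g • x₀ = 0 ↔ m ∣ g := by
    intro g
    constructor
    · intro h
      apply hdvd
      intro α
      have h2 := hx₀ g h (o α)
      rw [hsmul] at h2
      have h3 := congrArg o.symm h2
      simpa using h3
    · rintro ⟨c, rfl⟩
      rw [mul_smul]
      exact hmkill _
  -- the quotient ring
  set I : Ideal F[X] := Ideal.span {m} with hI'
  have hle : I ≤ LinearMap.ker (LinearMap.toSpanSingleton F[X] M x₀) := by
    rw [hI', Ideal.span_le]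
    rintro g hg
    rw [Set.mem_singleton_iff] at hg
    subst hg
    rw [SetLike.mem_coe, LinearMap.mem_ker, LinearMap.toSpanSingleton_apply]
    exact hmkill x₀
  set Θ₀ : (F[X] ⧸ I) →ₗ[F[X]] M :=
    Submodule.liftQ I (LinearMap.toSpanSingleton F[X] M x₀) hle with hΘ₀'
  have hinj : Function.Injective Θ₀ := by
    rw [← LinearMap.ker_eq_bot, hΘ₀']
    apply Submodule.ker_liftQ_eq_bot
    intro g hg
    rw [LinearMap.mem_ker, LinearMap.toSpanSingleton_apply] at hg
    exact Ideal.mem_span_singleton.mpr ((hx₀ann g).mp hg)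
  haveI : Finite M := Finite.of_equiv E o.toEquiv
  haveI : Finite (F[X] ⧸ I) := Finite.of_injective Θ₀ hinj
  have hfrM : Module.finrank F M = n := by
    rw [hn']
    exact o.finrank_eq.symm
  have hfrR : Module.finrank F (F[X] ⧸ I) = n := by
    have h : Module.finrank F (AdjoinRoot m) = m.natDegree :=
      PowerBasis.finrank (AdjoinRoot.powerBasis hm0)
    rw [hmdeg] at h
    exact h
  have hsurj : Function.Surjective Θ₀ := by
    have h := (LinearMap.injective_iff_surjective_of_finrank_eq_finrank
      (f := Θ₀.restrictScalars F) (hfrR.trans hfrM.symm)).mp hinj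
    exact h
  set Θ : (F[X] ⧸ I) ≃ₗ[F[X]] M := LinearEquiv.ofBijective Θ₀ ⟨hinj, hsurj⟩ with hΘ'
  -- normal elements are exactly the F[X]-generators
  have hdef : ∀ β : E, IsNormalElem F β ↔
      (LinearIndependent F (fun i : Fin n => β ^ q ^ (i : ℕ)) ∧
        Submodule.span F (Set.range fun i : Fin n => β ^ q ^ (i : ℕ)) = ⊤) :=
    fun β => Iff.rfl
  have hchar : ∀ β : E, IsNormalElem F β ↔ Submodule.span F[X] {o β} = ⊤ := by
    intro β
    constructor
    · intro hN
      have hspan := ((hdef β).mp hN).2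
      rw [eq_top_iff]
      rintro x -
      set T : Submodule F E := Submodule.comap (o : E →ₗ[F] M)
        (Submodule.restrictScalars F (Submodule.span F[X] {o β})) with hT'
      have hsub : Submodule.span F (Set.range fun i : Fin n => β ^ q ^ (i : ℕ)) ≤ T := by
        rw [Submodule.span_le]
        rintro y ⟨i, rfl⟩
        simp only [hT', SetLike.mem_coe, Submodule.mem_comap, Submodule.restrictScalars_mem]
        have hoX : o (β ^ q ^ (i : ℕ)) = (X : F[X]) ^ (i : ℕ) • o β := by
          rw [← frobLin_pow_apply]
          have h2 := Module.AEval.of_aeval_smul φ ((X : F[X]) ^ (i : ℕ)) β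
          rw [aeval_X_pow] at h2
          rw [← h2]
          rfl
        rw [show ((o : E →ₗ[F] M) (β ^ q ^ (i : ℕ))) = o (β ^ q ^ (i : ℕ)) from rfl, hoX]
        exact Submodule.smul_mem _ _ (Submodule.mem_span_singleton_self _)
      have hx : o.symm x ∈ (⊤ : Submodule F E) := trivial
      rw [← hspan] at hx
      have hx2 := hsub hx
      simp only [hT', Submodule.mem_comap, Submodule.restrictScalars_mem] at hx2
      simpa using hx2
    · intro htop
      have hsp : Submodule.span F (Set.range fun i : Fin n => β ^ q ^ (i : ℕ)) = ⊤ := by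
        rw [eq_top_iff]
        rintro x -
        have hx : o x ∈ Submodule.span F[X] {o β} := by rw [htop]; trivial
        obtain ⟨g, hg⟩ := Submodule.mem_span_singleton.mp hx
        have hxg : x = (aeval φ g) β := by
          apply o.injective
          rw [← hg, hsmul]
          simp
        rw [hxg, hq', hn']
        exact aeval_frobLin_mem_span hn hφn g β
      rw [hdef]
      refine ⟨?_, hsp⟩
      exact linearIndependent_of_top_le_span_of_card_eq_finrank (le_of_eq hsp.symm)
        (by simp [hn'])
  -- generators of the quotient ring are units
  have hunit : ∀ r : F[X] ⧸ I, Submodule.span F[X] {r} = ⊤ ↔ IsUnit r := by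
    intro r
    obtain ⟨s, rfl⟩ := Submodule.Quotient.mk_surjective (I : Submodule F[X] F[X]) r
    have hmul : ∀ g : F[X], g • (Submodule.Quotient.mk s : F[X] ⧸ I) =
        Submodule.Quotient.mk (g * s) := by
      intro g
      rw [← Submodule.Quotient.mk_smul, smul_eq_mul]
    constructor
    · intro h
      have h1 : (Submodule.Quotient.mk 1 : F[X] ⧸ I) ∈ Submodule.span F[X]
          {(Submodule.Quotient.mk s : F[X] ⧸ I)} := by rw [h]; trivial
      obtain ⟨g, hg⟩ := Submodule.mem_span_singleton.mp h1
      rw [hmul] at hg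
      refine IsUnit.of_mul_eq_one (Submodule.Quotient.mk g) ?_
      have : (Submodule.Quotient.mk (g * s) : F[X] ⧸ I) =
          Submodule.Quotient.mk s * Submodule.Quotient.mk g := by
        rw [mul_comm g s]
        rfl
      rw [← this, hg]
      rfl
    · intro h
      rw [eq_top_iff]
      rintro y -
      obtain ⟨u, hu⟩ := h
      obtain ⟨a, ha⟩ := Submodule.Quotient.mk_surjective (I : Submodule F[X] F[X])
        ((↑u⁻¹ : F[X] ⧸ I) * y)
      rw [Submodule.mem_span_singleton]
      refine ⟨a, ?_⟩
      rw [hmul]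
      have h2 : (Submodule.Quotient.mk (a * s) : F[X] ⧸ I) =
          Submodule.Quotient.mk a * Submodule.Quotient.mk s := rfl
      rw [h2, ha, ← hu, mul_comm _ (↑u : F[X] ⧸ I), ← mul_assoc, Units.mul_inv, one_mul]
  have hmapgen : ∀ x : F[X] ⧸ I, Submodule.span F[X] {x} = ⊤ →
      Submodule.span F[X] {Θ x} = ⊤ := by
    intro x h
    have h2 := congrArg (Submodule.map (Θ : (F[X] ⧸ I) →ₗ[F[X]] M)) h
    rw [Submodule.map_span, Set.image_singleton, Submodule.map_top] at h2
    simpa using h2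
  have hmapgen' : ∀ x : M, Submodule.span F[X] {x} = ⊤ →
      Submodule.span F[X] {Θ.symm x} = ⊤ := by
    intro x h
    have h2 := congrArg (Submodule.map (Θ.symm : M →ₗ[F[X]] F[X] ⧸ I)) h
    rw [Submodule.map_span, Set.image_singleton, Submodule.map_top] at h2
    simpa using h2
  have key : ∀ β : E, IsNormalElem F β ↔ IsUnit (Θ.symm (o β)) := by
    intro β
    rw [hchar β, ← hunit]
    constructor
    · intro h
      exact hmapgen' (o β) h
    · intro h
      have h2 := hmapgen _ h
      rwa [LinearEquiv.apply_symm_apply] at h2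
  have hnorm : ∀ u : (F[X] ⧸ I)ˣ, IsNormalElem F (o.symm (Θ u.val)) := by
    intro u
    rw [key]
    have h3 : Θ.symm (o (o.symm (Θ u.val))) = u.val := by simp
    rw [h3]
    exact u.isUnit
  set fmap : (F[X] ⧸ I)ˣ → {β : E // IsNormalElem F β} :=
    fun u => ⟨o.symm (Θ u.val), hnorm u⟩ with hfmap'
  have hbij : Function.Bijective fmap := by
    constructor
    · intro u v huv
      have h1 := congrArg Subtype.val huv
      simp only [hfmap'] at h1
      exact Units.ext (Θ.injective (o.symm.injective h1))
    · rintro ⟨β, hβ⟩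
      have h := (key β).mp hβ
      refine ⟨h.unit, ?_⟩
      apply Subtype.ext
      simp only [hfmap', IsUnit.unit_spec]
      simp
  refine ⟨(Nat.card_eq_of_bijective fmap hbij).symm, ?_, ?_⟩
  · haveI : Nonempty (F[X] ⧸ I)ˣ := ⟨1⟩
    exact Nat.card_pos
  · exact ⟨o.symm (Θ (1 : (F[X] ⧸ I)ˣ).val), hnorm 1⟩

end
end

section
/- Let α ∈ F_{q^n} have F_q-order f(x) = Σ_{i=0}^m a_i x^i. Then the F_q-order of the additive character χ_α equals the monic reciprocal f*(x) = a_0^{-1} x^m f(1/x). -/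
open Polynomial

noncomputable section

/-! ### Auxiliary machinery -/

set_option linter.unusedSectionVars false

/-- The `q`-power Frobenius as an `F`-linear endomorphism. -/
def qFrob (p : ℕ) [Fact p.Prime] (F : Type*) [Field F] [Fintype F] [CharP F p]
    (E : Type*) [Field E] [Algebra F E] [CharP E p] : E →ₗ[F] E where
  toFun x := x ^ Fintype.card F
  map_add' x y := by
    obtain ⟨s, hp, hs⟩ := FiniteField.card F p
    rw [hs]
    exact add_pow_char_pow x y p s
  map_smul' a x := by
    simp only [Algebra.smul_def, mul_pow, ← map_pow, FiniteField.pow_card, RingHom.id_apply]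

/-- The `p`-power Frobenius as a `ZMod p`-algebra automorphism of a finite field. -/
def pFrobAlgEquiv (p : ℕ) [Fact p.Prime] {E : Type*} [Field E] [Algebra (ZMod p) E] [CharP E p]
    [Finite E] : E ≃ₐ[ZMod p] E :=
  AlgEquiv.ofBijective
    (AlgHom.mk' (frobenius E p) (fun c x => by
      simp only [Algebra.smul_def, frobenius_def, mul_pow, ← map_pow, ZMod.pow_card]))
    ((Finite.injective_iff_bijective).mp (frobenius_inj E p))

section A
variable (p : ℕ) [Fact p.Prime] {F : Type*} [Field F] [Fintype F] [CharP F p]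
  {E : Type*} [Field E] [Algebra F E] [CharP E p]
include p

lemma qFrob_pow_apply (i : ℕ) (α : E) :
    ((qFrob p F E) ^ i) α = α ^ (Fintype.card F) ^ i := by
  induction i generalizing α with
  | zero => simp
  | succ i ih =>
    rw [pow_succ, Module.End.mul_apply]
    show ((qFrob p F E) ^ i) (α ^ Fintype.card F) = _
    rw [ih, ← pow_mul, ← pow_succ']

lemma fqAct_eq_aeval (g : F[X]) (α : E) :
    fqAct F g α = Polynomial.aeval (qFrob p F E) g α := by
  rw [fqAct, Polynomial.aeval_def, Polynomial.eval₂_eq_sum, Polynomial.sum_def,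
    Polynomial.sum_def, LinearMap.coe_sum, Finset.sum_apply]
  refine Finset.sum_congr rfl fun i _ => ?_
  rw [Module.End.mul_apply, qFrob_pow_apply]
  show _ = ((algebraMap F (Module.End F E)) (g.coeff i)) (α ^ Fintype.card F ^ i)
  rw [Module.algebraMap_end_apply, Algebra.smul_def]

lemma fqAct_mul (g h : F[X]) (α : E) :
    fqAct F (g * h) α = fqAct F g (fqAct F h α) := by
  simp only [fqAct_eq_aeval p, map_mul, Module.End.mul_apply]

lemma fqAct_add (g h : F[X]) (α : E) :
    fqAct F (g + h) α = fqAct F g α + fqAct F h α := by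
  simp only [fqAct_eq_aeval p, map_add, LinearMap.add_apply]

lemma fqAct_sub (g h : F[X]) (α : E) :
    fqAct F (g - h) α = fqAct F g α - fqAct F h α := by
  simp only [fqAct_eq_aeval p, map_sub, LinearMap.sub_apply]

lemma fqAct_zero_right (g : F[X]) : fqAct F g (0 : E) = 0 := by
  rw [fqAct_eq_aeval p, map_zero]

lemma fqAct_zero_left (α : E) : fqAct F (0 : F[X]) α = 0 := by
  rw [fqAct_eq_aeval p, map_zero, LinearMap.zero_apply]

lemma fqAct_X_pow (k : ℕ) (α : E) :
    fqAct F (X ^ k) α = α ^ (Fintype.card F) ^ k := by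
  rw [fqAct_eq_aeval p, map_pow, aeval_X, qFrob_pow_apply]

lemma fqAct_one (α : E) : fqAct F (1 : F[X]) α = α := by
  rw [fqAct_eq_aeval p, map_one, Module.End.one_apply]

end A

lemma fqAct_eq_sum {F : Type*} [Field F] [Fintype F] {E : Type*} [Field E] [Algebra F E]
    (g : F[X]) (α : E) {m : ℕ} (h : g.natDegree < m) :
    fqAct F g α = ∑ i ∈ Finset.range m, algebraMap F E (g.coeff i) * α ^ (Fintype.card F) ^ i := by
  rw [fqAct]
  exact Polynomial.sum_over_range' g (fun n => by simp) m h

section B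
variable (p : ℕ) [Fact p.Prime] {F : Type*} [Field F] [Fintype F] [CharP F p]
  {E : Type*} [Field E] [Algebra F E] [Algebra (ZMod p) E] [CharP E p] [Finite E]

lemma trace_pow_p_apply (γ : E) :
    Algebra.trace (ZMod p) E (γ ^ p) = Algebra.trace (ZMod p) E γ := by
  have := Algebra.trace_eq_of_algEquiv (pFrobAlgEquiv p (E := E)) γ
  rwa [show (pFrobAlgEquiv p (E := E)) γ = γ ^ p from rfl] at this

lemma trace_pow_p_pow (γ : E) (m : ℕ) :
    Algebra.trace (ZMod p) E (γ ^ p ^ m) = Algebra.trace (ZMod p) E γ := by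
  induction m with
  | zero => simp
  | succ m ih => rw [pow_succ, pow_mul, trace_pow_p_apply, ih]

lemma trace_pow_qpow (γ : E) (i : ℕ) :
    Algebra.trace (ZMod p) E (γ ^ (Fintype.card F) ^ i) = Algebra.trace (ZMod p) E γ := by
  obtain ⟨s, hp, hs⟩ := FiniteField.card F p
  rw [hs, ← pow_mul]
  exact trace_pow_p_pow p γ (s * i)

lemma trace_nondegen [FiniteDimensional (ZMod p) E] (γ : E)
    (h : ∀ β : E, Algebra.trace (ZMod p) E (γ * β) = 0) : γ = 0 := by
  by_contra hγ
  obtain ⟨δ, hδ⟩ : ∃ δ : E, Algebra.trace (ZMod p) E δ ≠ 0 := by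
    by_contra hall
    push_neg at hall
    exact Algebra.trace_ne_zero (ZMod p) E (LinearMap.ext fun x => hall x)
  exact hδ (by simpa [mul_inv_cancel_left₀ hγ] using h (γ⁻¹ * δ))

lemma stdChar_eq_one_iff (a γ : E) :
    stdChar p a γ = 1 ↔ Algebra.trace (ZMod p) E (a * γ) = 0 := by
  have hp0 : p ≠ 0 := (Fact.out (p := p.Prime)).ne_zero
  constructor
  · intro h
    rw [stdChar, Complex.exp_eq_one_iff] at h
    obtain ⟨m, hm⟩ := h
    set v : ℕ := (Algebra.trace (ZMod p) E (a * γ)).val with hv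
    have h2 : (2 * (Real.pi : ℂ) * Complex.I) ≠ 0 := by
      simp [Real.pi_ne_zero, Complex.I_ne_zero]
    have hveq : (v : ℂ) = m * p := by
      have hpc : (p : ℂ) ≠ 0 := Nat.cast_ne_zero.mpr hp0
      field_simp [hpc] at hm
      apply mul_left_cancel₀ h2
      linear_combination (2 * (Real.pi : ℂ) * Complex.I) * hm
    have hvnat : (v : ℤ) = m * p := by exact_mod_cast hveq
    have hdvd : (p : ℤ) ∣ (v : ℤ) := ⟨m, by linarith⟩
    have hlt : v < p := ZMod.val_lt _
    have hv0 : v = 0 := Nat.eq_zero_of_dvd_of_lt (Int.ofNat_dvd.mp (by exact_mod_cast hdvd)) hlt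
    exact (ZMod.val_eq_zero _).mp hv0
  · intro h
    rw [stdChar, h]
    simp

lemma trace_term_swap {n : ℕ} (α β : E) (c : F) {i : ℕ} (hin : i ≤ n)
    (hfix : ∀ γ : E, γ ^ (Fintype.card F) ^ n = γ) :
    Algebra.trace (ZMod p) E (algebraMap F E c * α * β ^ (Fintype.card F) ^ i) =
    Algebra.trace (ZMod p) E (algebraMap F E c * α ^ (Fintype.card F) ^ (n - i) * β) := by
  have key : (algebraMap F E c * α ^ (Fintype.card F) ^ (n - i) * β) ^ (Fintype.card F) ^ i
      = algebraMap F E c * α * β ^ (Fintype.card F) ^ i := by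
    rw [mul_pow, mul_pow, ← map_pow, FiniteField.pow_card_pow, ← pow_mul, ← pow_add,
      show n - i + i = n from Nat.sub_add_cancel hin, hfix]
  rw [← key, trace_pow_qpow]

lemma adjoint_eq {n : ℕ} (α β : E) (r : F[X]) (hrd : r.natDegree < n)
    (hfix : ∀ γ : E, γ ^ (Fintype.card F) ^ n = γ) :
    Algebra.trace (ZMod p) E (α * fqAct F r β) =
    Algebra.trace (ZMod p) E (fqAct F (X ^ (n - r.natDegree) * r.reverse) α * β) := by
  obtain ⟨s, hps, hs⟩ := FiniteField.card F p
  set d := r.natDegree with hd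
  have hrevd : r.reverse.natDegree < d + 1 :=
    Nat.lt_succ_of_le (reverse_natDegree_le r)
  have hψ : ∀ u : E, u ^ (Fintype.card F) ^ (n - d) = iterateFrobenius E p (s * (n - d)) u := by
    intro u
    rw [iterateFrobenius_def, hs, pow_mul]
  have hRHS : fqAct F (X ^ (n - d) * r.reverse) α
      = ∑ i ∈ Finset.range (d + 1),
          algebraMap F E (r.coeff (d - i)) * α ^ (Fintype.card F) ^ (n - (d - i)) := by
    rw [fqAct_mul p, fqAct_X_pow p, fqAct_eq_sum r.reverse α hrevd, hψ, map_sum]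
    refine Finset.sum_congr rfl fun j hj => ?_
    rw [Finset.mem_range, Nat.lt_succ_iff] at hj
    rw [← hψ, mul_pow, ← map_pow, FiniteField.pow_card_pow, ← pow_mul, ← pow_add,
      coeff_reverse, revAt_le hj]
    rw [show j + (n - d) = n - (d - j) by omega]
  rw [fqAct_eq_sum r β (Nat.lt_succ_self d), Finset.mul_sum, map_sum, hRHS,
    Finset.sum_mul, map_sum]
  have hre : ∑ i ∈ Finset.range (d + 1), Algebra.trace (ZMod p) E
        (algebraMap F E (r.coeff (d - i)) * α ^ (Fintype.card F) ^ (n - (d - i)) * β)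
      = ∑ i ∈ Finset.range (d + 1), Algebra.trace (ZMod p) E
        (algebraMap F E (r.coeff i) * α ^ (Fintype.card F) ^ (n - i) * β) := by
    simpa using Finset.sum_range_reflect
      (fun i => Algebra.trace (ZMod p) E
        (algebraMap F E (r.coeff i) * α ^ (Fintype.card F) ^ (n - i) * β)) (d + 1)
  rw [hre]
  refine Finset.sum_congr rfl fun i hi => ?_
  rw [Finset.mem_range, Nat.lt_succ_iff] at hi
  rw [show α * (algebraMap F E (r.coeff i) * β ^ (Fintype.card F) ^ i)
      = algebraMap F E (r.coeff i) * α * β ^ (Fintype.card F) ^ i by ring]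
  exact trace_term_swap p α β (r.coeff i) (le_of_lt (lt_of_le_of_lt hi hrd)) hfix

end B

section C
variable {K : Type*} [Field K]

lemma reverse_reverse_of_coeff_zero_ne {f : K[X]} (h0 : f.coeff 0 ≠ 0) :
    f.reverse.reverse = f := by
  have ht : f.natTrailingDegree = 0 := natTrailingDegree_eq_zero.mpr (Or.inr h0)
  have hd : f.reverse.natDegree = f.natDegree := by
    rw [reverse_natDegree, ht, tsub_zero]
  ext n
  rw [coeff_reverse, coeff_reverse, hd, revAt_invol]

lemma monicRecip_monic {f : K[X]} (h0 : f.coeff 0 ≠ 0) : (monicRecip f).Monic := by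
  have ht : f.natTrailingDegree = 0 := natTrailingDegree_eq_zero.mpr (Or.inr h0)
  have htc : f.trailingCoeff = f.coeff 0 := by rw [trailingCoeff, ht]
  show (monicRecip f).leadingCoeff = 1
  rw [monicRecip, leadingCoeff_mul, leadingCoeff_C, reverse_leadingCoeff, htc,
    inv_mul_cancel₀ h0]

lemma reverse_eq_C_mul_monicRecip {f : K[X]} (h0 : f.coeff 0 ≠ 0) :
    f.reverse = C (f.coeff 0) * monicRecip f := by
  rw [monicRecip, ← mul_assoc, ← C_mul, mul_inv_cancel₀ h0, C_1, one_mul]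

lemma monicRecip_dvd_iff {f r : K[X]} (h0 : f.coeff 0 ≠ 0) (hr : r ≠ 0) (k : ℕ) :
    f ∣ X ^ k * r.reverse ↔ monicRecip f ∣ r := by
  constructor
  · intro h
    have hX : ¬ (X : K[X]) ∣ f := fun hd => h0 (X_dvd_iff.mp hd)
    have hcop : IsCoprime f ((X : K[X]) ^ k) :=
      ((Polynomial.irreducible_X.coprime_iff_not_dvd.mpr hX)).symm.pow_right
    obtain ⟨w, hw⟩ : f ∣ r.reverse := hcop.dvd_of_dvd_mul_left h
    set t := r.natTrailingDegree with htdef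
    obtain ⟨r₂, hr₂⟩ : (X : K[X]) ^ t ∣ r :=
      X_pow_dvd_iff.mpr fun d hd => coeff_eq_zero_of_lt_natTrailingDegree hd
    have hr₂0 : r₂.coeff 0 ≠ 0 := by
      intro h00
      apply (coeff_natTrailingDegree_ne_zero.mpr hr)
      rw [← htdef, hr₂]
      have h2 : (X ^ t * r₂).coeff t = r₂.coeff 0 := by simpa using coeff_X_pow_mul r₂ t 0
      rw [h2]
      exact h00
    have hrev2 : r.reverse = r₂.reverse := by rw [hr₂, reverse_X_pow_mul]
    have hcong := congrArg reverse hw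
    rw [hrev2, reverse_reverse_of_coeff_zero_ne hr₂0, reverse_mul_of_domain] at hcong
    have : monicRecip f ∣ r₂ := by
      rw [hcong, reverse_eq_C_mul_monicRecip h0]
      exact ⟨C (f.coeff 0) * w.reverse, by ring⟩
    exact this.trans ⟨X ^ t, by rw [hr₂]; ring⟩
  · rintro ⟨w, hw⟩
    have : r.reverse = f * (C (f.coeff 0)⁻¹ * w.reverse) := by
      rw [hw, monicRecip, reverse_mul_of_domain, reverse_mul_of_domain, reverse_C,
        reverse_reverse_of_coeff_zero_ne h0]
      ring
    exact Dvd.dvd.mul_left ⟨_, this⟩ _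

end C

/-! ### Main theorem -/

theorem charFqOrder_stdChar_eq_monicRecip
    (p : ℕ) [Fact p.Prime] (F : Type*) [Field F] [Fintype F] [CharP F p]
    (E : Type*) [Field E] [Algebra F E] [Algebra (ZMod p) E]
    (n : ℕ) (hn : 1 ≤ n) (hrank : Module.finrank F E = n)
    (α : E) (f : F[X]) (hf : IsFqOrder F α f) :
    IsCharFqOrder F (stdChar p α) (monicRecip f) := by
  haveI : CharP E p := charP_of_injective_algebraMap (algebraMap F E).injective p
  haveI : Module.Finite F E := Module.finite_of_finrank_pos (by rw [hrank]; omega)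
  haveI : Finite E := Module.finite_of_finite F
  haveI : Fintype E := Fintype.ofFinite E
  -- basic cardinality facts
  have hcard : Fintype.card E = Fintype.card F ^ n := by
    rw [Module.card_eq_pow_finrank (K := F) (V := E), hrank]
  have hfix : ∀ γ : E, γ ^ (Fintype.card F) ^ n = γ := by
    intro γ
    rw [← hcard]
    exact FiniteField.pow_card γ
  -- f divides Xⁿ - 1
  have hXn : fqAct F ((X : F[X]) ^ n - 1) α = 0 := by
    rw [fqAct_sub p, fqAct_X_pow p, fqAct_one p, hfix, sub_self]
  have hfdvd : f ∣ (X : F[X]) ^ n - 1 := hf.2.2 _ hXn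
  have hf0 : f.coeff 0 ≠ 0 := by
    intro h0
    have hXf : (X : F[X]) ∣ f := X_dvd_iff.mpr h0
    have : ((X : F[X]) ^ n - 1).coeff 0 = 0 := X_dvd_iff.mp (hXf.trans hfdvd)
    rw [coeff_sub, coeff_X_pow, coeff_one] at this
    simp only [show ¬ (0 = n) by omega, if_false, if_true] at this
    norm_num at this
  -- monic modulus Xⁿ - 1
  have hmonicXn : ((X : F[X]) ^ n - 1).Monic := by
    have := monic_X_pow_sub_C (1 : F) (show n ≠ 0 by omega)
    rwa [map_one] at this
  have hXnne1 : ((X : F[X]) ^ n - 1) ≠ 1 := by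
    intro hh
    have h1 := congrArg natDegree hh
    rw [show ((X : F[X]) ^ n - 1) = X ^ n - C 1 by rw [map_one],
      natDegree_X_pow_sub_C, natDegree_one] at h1
    omega
  -- fqAct kills multiples of f
  have hkill : ∀ h : F[X], f ∣ h → fqAct F h α = 0 := by
    rintro h ⟨w, hw⟩
    rw [hw, mul_comm, fqAct_mul p, hf.2.1, fqAct_zero_right p]
  -- reduction mod Xⁿ - 1
  have hmod : ∀ (g : F[X]) (β : E), fqAct F g β = fqAct F (g %ₘ ((X : F[X]) ^ n - 1)) β := by
    intro g β
    conv_lhs => rw [← modByMonic_add_div g ((X : F[X]) ^ n - 1)]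
    rw [fqAct_add p, mul_comm, fqAct_mul p]
    have hz : fqAct F ((X : F[X]) ^ n - 1) β = 0 := by
      rw [fqAct_sub p, fqAct_X_pow p, fqAct_one p, hfix, sub_self]
    rw [hz, fqAct_zero_right p, add_zero]
  -- monicRecip f divides Xⁿ - 1
  have hstarXn : monicRecip f ∣ (X : F[X]) ^ n - 1 := by
    obtain ⟨k, hk⟩ := hfdvd
    have hrevXn : ((X : F[X]) ^ n - 1).reverse = -((X : F[X]) ^ n - 1) := by
      have hnd : ((X : F[X]) ^ n - 1).natDegree = n := by
        rw [show ((X : F[X]) ^ n - 1) = X ^ n - C 1 by rw [map_one], natDegree_X_pow_sub_C]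
      ext i
      rw [coeff_reverse, hnd]
      rcases le_or_gt i n with hi | hi
      · rw [revAt_le hi]
        simp only [coeff_sub, coeff_X_pow, coeff_one, coeff_neg]
        split_ifs <;> first | ring1 | (exfalso; omega)
      · rw [revAt_eq_self_of_lt hi]
        simp only [coeff_sub, coeff_X_pow, coeff_one, coeff_neg]
        split_ifs <;> first | ring1 | (exfalso; omega)
    have : -((X : F[X]) ^ n - 1) = f.reverse * k.reverse := by
      rw [← hrevXn, hk, reverse_mul_of_domain]
    have hrevdvd : f.reverse ∣ (X : F[X]) ^ n - 1 :=
      ⟨-k.reverse, by rw [mul_neg, ← this, neg_neg]⟩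
    calc monicRecip f ∣ f.reverse := by
            rw [reverse_eq_C_mul_monicRecip hf0]; exact Dvd.intro_left _ rfl
      _ ∣ (X : F[X]) ^ n - 1 := hrevdvd
  -- master equivalence
  have master : ∀ g : F[X],
      (∀ β : E, stdChar p α (fqAct F g β) = 1) ↔ monicRecip f ∣ g := by
    intro g
    set r := g %ₘ ((X : F[X]) ^ n - 1) with hrdef
    have hdvd_iff : monicRecip f ∣ g ↔ monicRecip f ∣ r := by
      constructor
      · intro h
        have : r = g - ((X : F[X]) ^ n - 1) * (g /ₘ ((X : F[X]) ^ n - 1)) := by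
          rw [eq_sub_iff_add_eq, hrdef, modByMonic_add_div g ((X : F[X]) ^ n - 1)]
        rw [this]
        exact dvd_sub h (hstarXn.mul_right _)
      · intro h
        have : g = r + ((X : F[X]) ^ n - 1) * (g /ₘ ((X : F[X]) ^ n - 1)) :=
          (modByMonic_add_div g ((X : F[X]) ^ n - 1)).symm
        rw [this]
        exact dvd_add h (hstarXn.mul_right _)
    by_cases hr : r = 0
    · constructor
      · intro _
        rw [hdvd_iff, hr]
        exact dvd_zero _
      · intro _ β
        rw [hmod g β, ← hrdef, hr, fqAct_zero_left p]
        exact (stdChar_eq_one_iff p α 0).mpr (by simp)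
    · have hrd : r.natDegree < n := by
        have := natDegree_modByMonic_lt g hmonicXn hXnne1
        rwa [show ((X : F[X]) ^ n - 1) = X ^ n - C 1 by rw [map_one],
          natDegree_X_pow_sub_C] at this
      have step1 : (∀ β : E, stdChar p α (fqAct F g β) = 1)
          ↔ ∀ β : E, Algebra.trace (ZMod p) E (α * fqAct F r β) = 0 := by
        refine forall_congr' fun β => ?_
        rw [hmod g β]
        exact stdChar_eq_one_iff p α _
      have step2 : (∀ β : E, Algebra.trace (ZMod p) E (α * fqAct F r β) = 0)
          ↔ fqAct F (X ^ (n - r.natDegree) * r.reverse) α = 0 := by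
        constructor
        · intro h
          apply trace_nondegen p
          intro β
          rw [← adjoint_eq p α β r hrd hfix]
          exact h β
        · intro h β
          rw [adjoint_eq p α β r hrd hfix, h, zero_mul, map_zero]
      have step3 : fqAct F (X ^ (n - r.natDegree) * r.reverse) α = 0
          ↔ f ∣ X ^ (n - r.natDegree) * r.reverse :=
        ⟨hf.2.2 _, hkill _⟩
      rw [step1, step2, step3, monicRecip_dvd_iff hf0 hr, ← hdvd_iff]
  exact ⟨monicRecip_monic hf0, (master _).mpr dvd_rfl, fun g hg => (master g).mp hg⟩
end
end

section
/- For every monic divisor f ∈ F_q[x] of x^n - 1, the set of additive characters of F_{q^n} of F_q-order f equals {χ_a : a ∈ F_{q^n}, m_{a,q} = f*}, where f* is the monic reciprocal of f. -/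
open Polynomial

noncomputable section

namespace HsuAux

section FqAct


variable {F : Type*} [Field F] [Fintype F] {E : Type*} [Field E] [Algebra F E]

lemma fqAct_zero_left (α : E) : fqAct F (0 : F[X]) α = 0 :=
  Polynomial.sum_zero_index _

lemma fqAct_add_left (g h : F[X]) (α : E) :
    fqAct F (g + h) α = fqAct F g α + fqAct F h α :=
  Polynomial.sum_add_index g h _ (fun i => by simp) (fun i a b => by rw [map_add, add_mul])

lemma fqAct_monomial (i : ℕ) (c : F) (α : E) :
    fqAct F (monomial i c) α = algebraMap F E c * α ^ (Fintype.card F) ^ i :=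
  Polynomial.sum_monomial_index c _ (by simp)

lemma fqAct_neg (g : F[X]) (α : E) : fqAct F (-g) α = -fqAct F g α := by
  have h := fqAct_add_left g (-g) α
  rw [add_neg_cancel, fqAct_zero_left] at h
  linear_combination -h

lemma fqAct_sub (g h : F[X]) (α : E) :
    fqAct F (g - h) α = fqAct F g α - fqAct F h α := by
  rw [sub_eq_add_neg, fqAct_add_left, fqAct_neg, sub_eq_add_neg]

lemma fqAct_zero_right (g : F[X]) : fqAct F g (0 : E) = 0 := by
  unfold fqAct
  rw [Polynomial.sum_def]
  apply Finset.sum_eq_zero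
  intro i _
  rw [zero_pow (pow_ne_zero _ Fintype.card_ne_zero), mul_zero]

lemma fqAct_C_mul (c : F) (u : F[X]) (α : E) :
    fqAct F (C c * u) α = algebraMap F E c * fqAct F u α := by
  unfold fqAct
  rw [← smul_eq_C_mul, Polynomial.sum_smul_index u c _ (fun i => by simp),
    Polynomial.sum_def, Polynomial.sum_def, Finset.mul_sum]
  exact Finset.sum_congr rfl fun i _ => by rw [map_mul, mul_assoc]

lemma fqAct_one (α : E) : fqAct F (1 : F[X]) α = α := by
  have : (1 : F[X]) = monomial 0 1 := by simp [Polynomial.monomial_zero_one]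
  rw [this, fqAct_monomial]; simp

lemma algebraMap_pow_card_pow (c : F) (j : ℕ) :
    (algebraMap F E c) ^ (Fintype.card F) ^ j = algebraMap F E c := by
  rw [← map_pow, FiniteField.pow_card_pow]

lemma add_pow_card (p : ℕ) [Fact p.Prime] [CharP F p] (x y : E) :
    (x + y) ^ (Fintype.card F) = x ^ Fintype.card F + y ^ Fintype.card F := by
  haveI : CharP E p := charP_of_injective_algebraMap (algebraMap F E).injective p
  obtain ⟨k, hp, hcard⟩ := FiniteField.card F p
  rw [hcard]
  exact add_pow_char_pow x y p k

lemma fqAct_X_mul (p : ℕ) [Fact p.Prime] [CharP F p] (u : F[X]) (α : E) :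
    fqAct F (X * u) α = (fqAct F u α) ^ (Fintype.card F) := by
  induction u using Polynomial.induction_on' with
  | add g h hg hh =>
      rw [mul_add, fqAct_add_left, fqAct_add_left, hg, hh, add_pow_card p]
  | monomial j c =>
      rw [X_mul_monomial, fqAct_monomial, fqAct_monomial, mul_pow, ← map_pow,
        FiniteField.pow_card, ← pow_mul, ← pow_succ]

lemma fqAct_X_pow_mul (p : ℕ) [Fact p.Prime] [CharP F p] (i : ℕ) (u : F[X]) (α : E) :
    fqAct F (X ^ i * u) α = (fqAct F u α) ^ (Fintype.card F) ^ i := by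
  induction i with
  | zero => simp
  | succ i ih =>
      rw [pow_succ', mul_assoc, fqAct_X_mul p, ih, ← pow_mul, ← pow_succ]

lemma fqAct_X_pow (p : ℕ) [Fact p.Prime] [CharP F p] (i : ℕ) (α : E) :
    fqAct F ((X : F[X]) ^ i) α = α ^ (Fintype.card F) ^ i := by
  rw [← mul_one ((X : F[X]) ^ i), fqAct_X_pow_mul p, fqAct_one]

lemma fqAct_mul (p : ℕ) [Fact p.Prime] [CharP F p] (g h : F[X]) (α : E) :
    fqAct F (g * h) α = fqAct F g (fqAct F h α) := by
  induction g using Polynomial.induction_on' with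
  | add g₁ g₂ h₁ h₂ => rw [add_mul, fqAct_add_left, fqAct_add_left, h₁, h₂]
  | monomial i c =>
      rw [← C_mul_X_pow_eq_monomial, mul_assoc, fqAct_C_mul, fqAct_X_pow_mul p,
        fqAct_C_mul, fqAct_X_pow p]

end FqAct


section Trace
variable (p : ℕ) [Fact p.Prime] {E : Type*} [Field E] [Finite E] [Algebra (ZMod p) E]

lemma trace_frob (x : E) : Algebra.trace (ZMod p) E (x ^ p) = Algebra.trace (ZMod p) E x := by
  haveI : CharP E p := charP_of_injective_algebraMap (algebraMap (ZMod p) E).injective p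
  haveI : PerfectRing E p := inferInstance
  let σ : E ≃ₐ[ZMod p] E := AlgEquiv.ofRingEquiv (f := frobeniusEquiv E p)
    (fun r => by rw [frobeniusEquiv_def, ← map_pow, ZMod.pow_card])
  have h := Algebra.trace_eq_of_algEquiv σ x
  rw [← h]; rfl

lemma trace_pow_pow (m : ℕ) (x : E) :
    Algebra.trace (ZMod p) E (x ^ p ^ m) = Algebra.trace (ZMod p) E x := by
  induction m with
  | zero => simp
  | succ m ih => rw [pow_succ, pow_mul, trace_frob, ih]

lemma trace_nondegen (c : E) (h : ∀ β : E, Algebra.trace (ZMod p) E (c * β) = 0) : c = 0 := by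
  have hnd := traceForm_nondegenerate (ZMod p) E
  exact hnd.1 c (fun y => by simpa using h y)

end Trace

section Poly
variable {K : Type*} [Field K]

lemma dvd_pow_sub_pow_of_le {n : ℕ} {a b : ℕ} (h : a ≡ b [MOD n]) (hba : b ≤ a) :
    (X ^ n - 1 : K[X]) ∣ X ^ a - X ^ b := by
  obtain ⟨t, ht⟩ := (Nat.modEq_iff_dvd' hba).mp h.symm
  have ha : a = b + n * t := by omega
  subst ha
  have h2 : (X ^ n - 1 : K[X]) ∣ (X ^ n) ^ t - 1 := by
    simpa using sub_dvd_pow_sub_pow (X ^ n : K[X]) 1 t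
  obtain ⟨w, hw⟩ := h2
  refine ⟨X ^ b * w, ?_⟩
  rw [pow_add, pow_mul]
  linear_combination (X : K[X]) ^ b * hw

lemma dvd_pow_sub_pow {n : ℕ} {a b : ℕ} (h : a ≡ b [MOD n]) :
    (X ^ n - 1 : K[X]) ∣ X ^ a - X ^ b := by
  rcases le_total b a with hba | hab
  · exact dvd_pow_sub_pow_of_le h hba
  · have h2 := dvd_pow_sub_pow_of_le (K := K) h.symm hab
    rw [← dvd_neg] at h2; simpa using h2

lemma reflect_sum {ι : Type*} (s : Finset ι) (f : ι → K[X]) (N : ℕ) :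
    reflect N (∑ i ∈ s, f i) = ∑ i ∈ s, reflect N (f i) := by
  classical
  induction s using Finset.induction_on with
  | empty => simp
  | insert _ _ h ih => rw [Finset.sum_insert h, Finset.sum_insert h, reflect_add, ih]

lemma key_congr {n : ℕ} (hn : 1 ≤ n) (m : K[X]) (N : ℕ) (hN : m.natDegree ≤ N) :
    (X ^ n - 1 : K[X]) ∣ m.comp (X ^ (n-1)) - X ^ ((n-1)*N) * reflect N m := by
  have hm : m = ∑ i ∈ Finset.range (N+1), C (m.coeff i) * X ^ i := by
    conv_lhs => rw [m.as_sum_range' (N+1) (Nat.lt_succ_of_le hN)]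
    exact Finset.sum_congr rfl fun i _ => (C_mul_X_pow_eq_monomial).symm
  rw [hm, sum_comp, reflect_sum, Finset.mul_sum, ← Finset.sum_sub_distrib]
  apply Finset.dvd_sum
  intro i hi
  have h1 : i ≤ N := Nat.lt_succ_iff.mp (Finset.mem_range.mp hi)
  rw [C_mul_comp, X_pow_comp, ← pow_mul, reflect_C_mul_X_pow, revAt_le h1,
    mul_comm ((X : K[X]) ^ ((n-1)*N)), mul_assoc, ← pow_add, ← mul_sub]
  apply Dvd.dvd.mul_left
  apply dvd_pow_sub_pow
  rw [Nat.modEq_iff_dvd]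
  refine ⟨(N : ℤ) - i, ?_⟩
  push_cast [Nat.cast_sub hn, Nat.cast_sub h1]
  ring

lemma comp_comp_congr {n : ℕ} (hn : 1 ≤ n) (g : K[X]) :
    (X ^ n - 1 : K[X]) ∣ (g.comp (X ^ (n-1))).comp (X ^ (n-1)) - g := by
  rw [comp_assoc, X_pow_comp, ← pow_mul]
  induction g using Polynomial.induction_on' with
  | add u v hu hv =>
      have h2 : (u+v).comp (X ^ ((n-1)*(n-1))) - (u+v)
          = (u.comp (X ^ ((n-1)*(n-1))) - u) + (v.comp (X ^ ((n-1)*(n-1))) - v) := by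
        rw [add_comp]; ring
      rw [h2]; exact dvd_add hu hv
  | monomial i c =>
      rw [← C_mul_X_pow_eq_monomial, C_mul_comp, X_pow_comp, ← pow_mul, ← mul_sub]
      apply Dvd.dvd.mul_left
      apply dvd_pow_sub_pow
      rw [Nat.modEq_iff_dvd]
      refine ⟨(i : ℤ) * (2 - n), ?_⟩
      push_cast [Nat.cast_sub hn]
      ring

lemma reverse_X_pow_sub_one {n : ℕ} (hn : 1 ≤ n) :
    reverse ((X : K[X]) ^ n - 1) = 1 - X ^ n := by
  have hdeg : ((X : K[X]) ^ n - 1).natDegree = n := by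
    simpa using natDegree_X_pow_sub_C (n := n) (r := (1:K))
  have h1 : ((X : K[X]) ^ n - 1) = X ^ n - C 1 := by simp
  unfold Polynomial.reverse
  rw [hdeg, h1, reflect_sub, reflect_monomial, reflect_C, revAt_le le_rfl]
  simp

lemma coeff_zero_ne_zero_of_dvd {n : ℕ} (hn : 1 ≤ n) {f : K[X]} (hdvd : f ∣ X ^ n - 1) :
    f.coeff 0 ≠ 0 := by
  intro h0
  obtain ⟨u, hu⟩ := hdvd
  have h := congrArg (fun q => Polynomial.eval 0 q) hu
  simp only [eval_sub, eval_pow, eval_X, eval_one, eval_mul] at h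
  rw [zero_pow (by omega : n ≠ 0), ← coeff_zero_eq_eval_zero, h0, zero_mul] at h
  norm_num at h

variable {f m : K[X]}

lemma trailing_eq_zero (h0 : f.coeff 0 ≠ 0) : f.natTrailingDegree = 0 :=
  natTrailingDegree_eq_zero.mpr (Or.inr h0)

lemma trailingCoeff_eq (h0 : f.coeff 0 ≠ 0) : f.trailingCoeff = f.coeff 0 := by
  rw [trailingCoeff, trailing_eq_zero h0]

lemma monicRecip_monic (h0 : f.coeff 0 ≠ 0) : (monicRecip f).Monic := by
  unfold monicRecip
  have h1 : (C (f.coeff 0)⁻¹ * f.reverse).leadingCoeff = (f.coeff 0)⁻¹ * f.reverse.leadingCoeff := by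
    rw [leadingCoeff_mul, leadingCoeff_C]
  rw [Monic, h1, reverse_leadingCoeff, trailingCoeff_eq h0, inv_mul_cancel₀ h0]

lemma reverse_eq_C_mul_monicRecip (h0 : f.coeff 0 ≠ 0) :
    f.reverse = C (f.coeff 0) * monicRecip f := by
  unfold monicRecip
  rw [← mul_assoc, ← C_mul, mul_inv_cancel₀ h0, C_1, one_mul]

lemma coeff_zero_monicRecip (hf : f.Monic) : (monicRecip f).coeff 0 = (f.coeff 0)⁻¹ := by
  unfold monicRecip
  rw [coeff_C_mul, coeff_zero_reverse, hf.leadingCoeff, mul_one]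

lemma reverse_reverse (h0 : f.coeff 0 ≠ 0) : f.reverse.reverse = f := by
  have h1 : f.reverse.natDegree = f.natDegree := by
    rw [reverse_natDegree, trailing_eq_zero h0, tsub_zero]
  ext i
  rw [coeff_reverse, coeff_reverse, h1, revAt_invol]

lemma reverse_C (c : K) : (C c : K[X]).reverse = C c := by
  unfold Polynomial.reverse
  rw [natDegree_C, reflect_C, pow_zero, mul_one]

lemma monicRecip_monicRecip (hf : f.Monic) (h0 : f.coeff 0 ≠ 0) :
    monicRecip (monicRecip f) = f := by
  have h2 : monicRecip (monicRecip f)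
      = C ((f.coeff 0)⁻¹)⁻¹ * (C (f.coeff 0)⁻¹ * f.reverse).reverse := by
    unfold monicRecip
    rw [coeff_C_mul, coeff_zero_reverse, hf.leadingCoeff, mul_one]
  rw [h2, reverse_mul_of_domain, reverse_C, reverse_reverse h0, inv_inv, ← mul_assoc, ← C_mul,
    mul_inv_cancel₀ h0, C_1, one_mul]

lemma monicRecip_dvd {n : ℕ} (hn : 1 ≤ n) (hm : m ∣ X ^ n - 1) (h0 : m.coeff 0 ≠ 0) :
    monicRecip m ∣ X ^ n - 1 := by
  obtain ⟨u, hu⟩ := hm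
  have h1 : reverse (X ^ n - 1 : K[X]) = reverse m * reverse u := by
    rw [hu, reverse_mul_of_domain]
  rw [reverse_X_pow_sub_one hn] at h1
  have hdvd : monicRecip m ∣ (1 - X ^ n : K[X]) := by
    rw [h1, reverse_eq_C_mul_monicRecip h0]
    exact ⟨C (m.coeff 0) * reverse u, by ring⟩
  rw [show (1 - X ^ n : K[X]) = -(X ^ n - 1) by ring, dvd_neg] at hdvd
  exact hdvd

lemma recip_dvd_comp {n : ℕ} (hn : 1 ≤ n) {g : K[X]} (hm : m ∣ X ^ n - 1)
    (h0 : m.coeff 0 ≠ 0) (hdvd : m ∣ g) :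
    monicRecip m ∣ g.comp (X ^ (n-1)) := by
  have h1 : monicRecip m ∣ m.comp (X ^ (n-1)) := by
    have h2 := key_congr (K := K) hn m m.natDegree le_rfl
    have h3 : monicRecip m ∣ X ^ ((n-1)*m.natDegree) * reflect m.natDegree m := by
      rw [show reflect m.natDegree m = reverse m from rfl, reverse_eq_C_mul_monicRecip h0]
      exact ⟨X ^ ((n-1)*m.natDegree) * C (m.coeff 0), by ring⟩
    have h4 : monicRecip m ∣ X ^ n - 1 := monicRecip_dvd hn hm h0
    have h5 : m.comp (X ^ (n-1))
        = (m.comp (X ^ (n-1)) - X ^ ((n-1)*m.natDegree) * reflect m.natDegree m)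
          + X ^ ((n-1)*m.natDegree) * reflect m.natDegree m := by ring
    rw [h5]
    exact dvd_add (h4.trans h2) h3
  obtain ⟨u, hu⟩ := hdvd
  rw [hu, mul_comp]
  exact h1.mul_right _

lemma dvd_comp_iff {n : ℕ} (hn : 1 ≤ n) (hmm : m.Monic) (hm : m ∣ X ^ n - 1) (g : K[X]) :
    m ∣ g.comp (X ^ (n-1)) ↔ monicRecip m ∣ g := by
  have h0 : m.coeff 0 ≠ 0 := coeff_zero_ne_zero_of_dvd hn hm
  have hm' : monicRecip m ∣ X ^ n - 1 := monicRecip_dvd hn hm h0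
  have h0' : (monicRecip m).coeff 0 ≠ 0 := coeff_zero_ne_zero_of_dvd hn hm'
  constructor
  · intro h
    have h2 := recip_dvd_comp hn hm h0 h
    have h4 : monicRecip m ∣ (g.comp (X ^ (n-1))).comp (X ^ (n-1)) - g :=
      hm'.trans (comp_comp_congr hn g)
    have h5 := dvd_sub h2 h4
    simpa using h5
  · intro h
    have h2 := recip_dvd_comp hn hm' h0' h
    rwa [monicRecip_monicRecip hmm h0] at h2

end Poly

section StdChar
variable (p : ℕ) [Fact p.Prime] {E : Type*} [Field E] [Algebra (ZMod p) E]

lemma stdChar_apply (a β : E) :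
    stdChar p a β = ZMod.stdAddChar (Algebra.trace (ZMod p) E (a * β)) := by
  rw [ZMod.stdAddChar_apply, ZMod.toCircle_apply, stdChar]

lemma stdAddChar_eq_one_iff {j : ZMod p} : ZMod.stdAddChar j = (1 : ℂ) ↔ j = 0 := by
  constructor
  · intro h
    exact ZMod.injective_stdAddChar (h.trans (AddChar.map_zero_eq_one _).symm)
  · rintro rfl; exact AddChar.map_zero_eq_one _

end StdChar
end HsuAux

section Main
open HsuAux
variable (p : ℕ) [Fact p.Prime] {F : Type*} [Field F] [Fintype F] [CharP F p]
  {E : Type*} [Field E] [Algebra F E] [Algebra (ZMod p) E] [Finite E] {n : ℕ}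

lemma HsuAux.pow_iter (hpow : ∀ γ : E, γ ^ (Fintype.card F) ^ n = γ) (i : ℕ) (γ : E) :
    γ ^ ((Fintype.card F ^ n) ^ i) = γ := by
  induction i with
  | zero => simpa using pow_one γ
  | succ i ih => rw [pow_succ, pow_mul, ih, hpow]

lemma HsuAux.trace_adjoint (hn : 1 ≤ n) (hpow : ∀ γ : E, γ ^ (Fintype.card F) ^ n = γ)
    (g : F[X]) (a β : E) :
    Algebra.trace (ZMod p) E (a * fqAct F g β)
      = Algebra.trace (ZMod p) E (fqAct F (g.comp (X ^ (n-1))) a * β) := by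
  induction g using Polynomial.induction_on' with
  | add u v hu hv =>
      rw [fqAct_add_left, add_comp, fqAct_add_left, mul_add, add_mul, map_add, map_add, hu, hv]
  | monomial i c =>
      obtain ⟨n', rfl⟩ : ∃ n', n = n' + 1 := ⟨n - 1, by omega⟩
      simp only [Nat.add_sub_cancel] at hpow ⊢
      rw [fqAct_monomial, ← C_mul_X_pow_eq_monomial, C_mul_comp, X_pow_comp, ← pow_mul,
        fqAct_C_mul, fqAct_X_pow p]
      obtain ⟨k, hp, hcard⟩ := FiniteField.card F p
      have key : ∀ x : E,
          Algebra.trace (ZMod p) E (x ^ (Fintype.card F) ^ (n' * i))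
            = Algebra.trace (ZMod p) E x := by
        intro x
        rw [hcard, ← pow_mul]
        exact trace_pow_pow p _ x
      rw [← key (a * (algebraMap F E c * β ^ (Fintype.card F) ^ i))]
      congr 1
      rw [mul_pow, mul_pow, algebraMap_pow_card_pow, ← pow_mul, ← pow_add,
        show i + n' * i = (n' + 1) * i by ring,
        show (Fintype.card F) ^ ((n' + 1) * i) = ((Fintype.card F) ^ (n' + 1)) ^ i from
          pow_mul _ _ _,
        pow_iter hpow i β]
      ring

lemma HsuAux.fqAct_Xn_sub_one (p' : ℕ) [Fact p'.Prime] [CharP F p']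
    (hpow : ∀ γ : E, γ ^ (Fintype.card F) ^ n = γ) (γ : E) :
    fqAct F ((X : F[X]) ^ n - 1) γ = 0 := by
  rw [fqAct_sub, fqAct_X_pow p', fqAct_one, hpow, sub_self]

lemma HsuAux.fqAct_congr_mod (p' : ℕ) [Fact p'.Prime] [CharP F p']
    (hpow : ∀ γ : E, γ ^ (Fintype.card F) ^ n = γ) {u v : F[X]}
    (h : ((X : F[X]) ^ n - 1) ∣ u - v) (a : E) :
    fqAct F u a = fqAct F v a := by
  obtain ⟨w, hw⟩ := h
  have hu : u = v + w * ((X : F[X]) ^ n - 1) := by linear_combination hw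
  rw [hu, fqAct_add_left, fqAct_mul p', fqAct_Xn_sub_one p' hpow, fqAct_zero_right, add_zero]

lemma HsuAux.char_trivial_iff (hn : 1 ≤ n) (hpow : ∀ γ : E, γ ^ (Fintype.card F) ^ n = γ)
    (a : E) (g : F[X]) :
    (∀ β : E, stdChar p a (fqAct F g β) = 1) ↔ fqAct F (g.comp (X ^ (n-1))) a = 0 := by
  constructor
  · intro h
    apply trace_nondegen p
    intro β
    have h2 := h β
    rw [stdChar_apply, stdAddChar_eq_one_iff] at h2
    rw [← trace_adjoint p hn hpow]
    exact h2
  · intro h β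
    rw [stdChar_apply, stdAddChar_eq_one_iff, trace_adjoint p hn hpow, h, zero_mul, map_zero]

lemma HsuAux.exists_stdChar [Fintype E] (χ : AddChar E ℂ) :
    ∃ a : E, ∀ β : E, χ β = stdChar p a β := by
  classical
  let st : E → AddChar E ℂ := fun a => (ZMod.stdAddChar (N := p)).compAddMonoidHom
    ((Algebra.trace (ZMod p) E).toAddMonoidHom.comp (AddMonoidHom.mulLeft a))
  have hst : ∀ a β, st a β = stdChar p a β := by
    intro a β
    rw [stdChar_apply]
    rfl
  have hinj : Function.Injective st := by
    intro a b hab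
    have h : ∀ β : E, Algebra.trace (ZMod p) E ((a - b) * β) = 0 := by
      intro β
      have h1 : st a β = st b β := by rw [hab]
      have h2 : Algebra.trace (ZMod p) E (a * β) = Algebra.trace (ZMod p) E (b * β) :=
        ZMod.injective_stdAddChar h1
      rw [sub_mul, map_sub, h2, sub_self]
    have h3 := trace_nondegen p _ h
    exact sub_eq_zero.mp h3
  have hsurj : Function.Surjective st :=
    ((Fintype.bijective_iff_injective_and_card st).mpr ⟨hinj, AddChar.card_eq.symm⟩).2
  obtain ⟨a, ha⟩ := hsurj χ
  exact ⟨a, fun β => by rw [← ha, hst]⟩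

include p in
lemma HsuAux.isFqOrder_iff (a : E) (m : F[X]) :
    IsFqOrder F a m ↔ (m.Monic ∧ ∀ g : F[X], (fqAct F g a = 0 ↔ m ∣ g)) := by
  constructor
  · rintro ⟨h1, h2, h3⟩
    refine ⟨h1, fun g => ⟨h3 g, ?_⟩⟩
    rintro ⟨u, rfl⟩
    rw [mul_comm, fqAct_mul p, h2, fqAct_zero_right]
  · rintro ⟨h1, h2⟩
    exact ⟨h1, (h2 m).mpr dvd_rfl, fun g hg => (h2 g).mp hg⟩

include p in
lemma HsuAux.isCharFqOrder_iff (χ : E → ℂ) (m : F[X]) :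
    IsCharFqOrder F χ m ↔ (m.Monic ∧ ∀ g : F[X], ((∀ β : E, χ (fqAct F g β) = 1) ↔ m ∣ g)) := by
  constructor
  · rintro ⟨h1, h2, h3⟩
    refine ⟨h1, fun g => ⟨h3 g, ?_⟩⟩
    rintro ⟨u, rfl⟩ β
    rw [fqAct_mul p, h2]
  · rintro ⟨h1, h2⟩
    exact ⟨h1, (h2 m).mpr dvd_rfl, fun g hg => (h2 g).mp hg⟩

lemma HsuAux.master (hn : 1 ≤ n) (hpow : ∀ γ : E, γ ^ (Fintype.card F) ^ n = γ)
    (f : F[X]) (hf : f.Monic) (hdvd : f ∣ X ^ n - 1) (a : E) :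
    IsCharFqOrder F (stdChar p a) f ↔ IsFqOrder F a (monicRecip f) := by
  have h0 : f.coeff 0 ≠ 0 := coeff_zero_ne_zero_of_dvd hn hdvd
  have hf' : (monicRecip f).Monic := monicRecip_monic h0
  have hfd' : monicRecip f ∣ X ^ n - 1 := monicRecip_dvd hn hdvd h0
  rw [isFqOrder_iff p, isCharFqOrder_iff p]
  constructor
  · rintro ⟨h1, h2⟩
    refine ⟨hf', fun g => ?_⟩
    calc fqAct F g a = 0
        ↔ fqAct F ((g.comp (X ^ (n-1))).comp (X ^ (n-1))) a = 0 := by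
          rw [fqAct_congr_mod p (hpow := hpow) (comp_comp_congr hn g) a]
      _ ↔ ∀ β : E, stdChar p a (fqAct F (g.comp (X ^ (n-1))) β) = 1 :=
          (char_trivial_iff p hn hpow a _).symm
      _ ↔ f ∣ g.comp (X ^ (n-1)) := h2 _
      _ ↔ monicRecip f ∣ g := dvd_comp_iff hn hf hdvd g
  · rintro ⟨h1, h2⟩
    refine ⟨hf, fun g => ?_⟩
    calc (∀ β : E, stdChar p a (fqAct F g β) = 1)
        ↔ fqAct F (g.comp (X ^ (n-1))) a = 0 := char_trivial_iff p hn hpow a g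
      _ ↔ monicRecip f ∣ g.comp (X ^ (n-1)) := h2 _
      _ ↔ monicRecip (monicRecip f) ∣ g := dvd_comp_iff hn hf' hfd' g
      _ ↔ f ∣ g := by rw [monicRecip_monicRecip hf h0]

end Main

theorem charFqOrder_eq_iff_stdChar_of_recipOrder
    (p : ℕ) [Fact p.Prime] (F : Type*) [Field F] [Fintype F] [CharP F p]
    (E : Type*) [Field E] [Algebra F E] [Algebra (ZMod p) E]
    (n : ℕ) (hn : 1 ≤ n) (hrank : Module.finrank F E = n)
    (f : F[X]) (hf : f.Monic) (hdvd : f ∣ X ^ n - 1) (χ : AddChar E ℂ) :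
    IsCharFqOrder F (⇑χ) f ↔
      ∃ a : E, IsFqOrder F a (monicRecip f) ∧ ∀ β : E, χ β = stdChar p a β := by
  haveI : FiniteDimensional F E := .of_finrank_pos (hrank ▸ hn)
  haveI : Finite E := Module.finite_of_finite F
  haveI : Fintype E := Fintype.ofFinite E
  have hpow : ∀ γ : E, γ ^ (Fintype.card F) ^ n = γ := by
    intro γ
    have hc : Fintype.card E = Fintype.card F ^ n := by
      rw [Module.card_eq_pow_finrank (K := F) (V := E), hrank]
    rw [← hc, FiniteField.pow_card]
  constructor
  · intro h
    obtain ⟨a, ha⟩ := HsuAux.exists_stdChar p χ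
    refine ⟨a, ?_, ha⟩
    have hχ : ⇑χ = stdChar p a := funext ha
    rw [hχ] at h
    exact (HsuAux.master p hn hpow f hf hdvd a).mp h
  · rintro ⟨a, hord, ha⟩
    have hχ : ⇑χ = stdChar p a := funext ha
    rw [hχ]
    exact (HsuAux.master p hn hpow f hf hdvd a).mpr hord
end
end

section
/- Let q = p^s, g(x) = Σ_{i=0}^m a_i x^i ∈ F_q[x] monic of degree m < n with a_0 ≠ 0, and α ∈ F_{q^n}. Writing Tr_{q^n/p}(α L_g(x)) ≡ Σ_{i=0}^{ns-1} c_i x^{p^i} (mod x^{q^n} - x) with L_g(x) = Σ_{i=0}^m a_i x^{q^i}, one has c_0^{q^m} = a_0 · (g* ∘ α), where g* is the monic reciprocal of g. -/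
open Polynomial

noncomputable section

theorem aux_dvd (p N : ℕ) (hp : p.Prime) (E : Type*) [Field E] [CharP E p] (hN : 0 < N)
    (t : ℕ) : (X ^ p ^ N - X : E[X]) ∣ X ^ p ^ t - X ^ p ^ (t % N) := by
  haveI : Fact p.Prime := ⟨hp⟩
  haveI : ExpChar E[X] p := ExpChar.prime hp
  induction t using Nat.strong_induction_on with
  | _ t ih =>
    rcases lt_or_ge t N with h | h
    · rw [Nat.mod_eq_of_lt h, sub_self]; exact dvd_zero _
    · have h2 : t - N < t := by omega
      have heq : (X:E[X]) ^ p ^ t - X ^ p ^ (t % N) =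
          ((X:E[X]) ^ p ^ N - X) ^ p ^ (t - N) +
            ((X:E[X]) ^ p ^ (t - N) - X ^ p ^ ((t - N) % N)) := by
        rw [sub_pow_char_pow, ← pow_mul, ← pow_add]
        have h3 : N + (t - N) = t := by omega
        have h4 : t % N = (t - N) % N := by
          conv_lhs => rw [← h3, Nat.add_comm, Nat.add_mod_right]
        rw [h3, h4]; ring
      rw [heq]
      exact dvd_add (dvd_pow_self _ (Nat.pow_pos hp.pos).ne') (ih _ h2)

theorem aux_pow_red (p N : ℕ) (E : Type*) [Field E] [Fintype E]
    (hQ : Fintype.card E = p ^ N) (hN : 0 < N) (x : E) (t : ℕ) :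
    x ^ p ^ t = x ^ p ^ (t % N) := by
  induction t using Nat.strong_induction_on with
  | _ t ih =>
    rcases lt_or_ge t N with h | h
    · rw [Nat.mod_eq_of_lt h]
    · have h3 : N + (t - N) = t := by omega
      have h4 : t % N = (t - N) % N := by
        conv_lhs => rw [← h3, Nat.add_comm, Nat.add_mod_right]
      calc x ^ p ^ t = (x ^ p ^ (t - N)) ^ p ^ N := by
            rw [← pow_mul, ← pow_add, Nat.add_comm, h3]
        _ = x ^ p ^ (t - N) := by rw [← hQ, FiniteField.pow_card]
        _ = x ^ p ^ (t % N) := by rw [h4]; exact ih _ (by omega)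

theorem aux_idx (N a : ℕ) (hN : 0 < N) (h : a < N) :
    (a + (N - a) % N) % N = 0 := by
  rcases Nat.eq_zero_or_pos a with rfl | ha
  · simp [Nat.mod_self]
  · rw [Nat.mod_eq_of_lt (by omega : N - a < N)]
    have h2 : a + (N - a) = N := by omega
    rw [h2, Nat.mod_self]

theorem aux_idx2 (N a i : ℕ) (hN : 0 < N) (ha : a < N) (hi : i < N)
    (h : (a + i) % N = 0) : i = (N - a) % N := by
  obtain ⟨k, hk⟩ := Nat.dvd_of_mod_eq_zero h
  have hk2 : N * k < N * 2 := by omega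
  have hk3 : k < 2 := Nat.lt_of_mul_lt_mul_left hk2
  interval_cases k
  · have h0 : a = 0 ∧ i = 0 := by omega
    rw [h0.2, h0.1, Nat.sub_zero, Nat.mod_self]
  · have ha0 : 0 < a := by omega
    rw [Nat.mod_eq_of_lt (by omega : N - a < N)]
    omega

theorem aux_idx3 (N s m j : ℕ) (hN : 0 < N) (hj : j ≤ m) (hsm : s * m < N) :
    ((N - s * j) % N + s * m) % N = s * (m - j) := by
  have hsj : s * j ≤ s * m := Nat.mul_le_mul_left s hj
  have hms : s * (m - j) + s * j = s * m := by
    rw [← Nat.mul_add]; congr 1; omega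
  rcases Nat.eq_zero_or_pos (s * j) with h0 | hpos
  · rw [h0, Nat.sub_zero, Nat.mod_self, Nat.zero_add, Nat.mod_eq_of_lt hsm]
    omega
  · rw [Nat.mod_eq_of_lt (by omega : N - s * j < N)]
    have h1 : N - s * j + s * m = s * (m - j) + N := by omega
    rw [h1, Nat.add_mod_right, Nat.mod_eq_of_lt (by omega)]

theorem aux_mod_eq {R : Type*} [Field R] (A RR M : R[X]) (hM : M.Monic)
    (hdvd : M ∣ A - RR) (hdeg : RR.degree < M.degree) : A %ₘ M = RR := by
  have h1 : A %ₘ M - RR = (A - RR) - M * (A /ₘ M) := by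
    linear_combination modByMonic_add_div A M
  have h2 : M ∣ A %ₘ M - RR := h1 ▸ dvd_sub hdvd (Dvd.intro _ rfl)
  have h3 : (A %ₘ M - RR).degree < M.degree :=
    lt_of_le_of_lt (degree_sub_le _ _) (max_lt (degree_modByMonic_lt _ hM) hdeg)
  exact sub_eq_zero.mp (Polynomial.eq_zero_of_dvd_of_degree_lt h2 h3)

theorem trace_linearized_coeff
    (p s : ℕ) [Fact p.Prime] (F : Type*) [Field F] [Fintype F] [CharP F p]
    (E : Type*) [Field E] [Fintype E] [Algebra F E]
    (hq : Fintype.card F = p ^ s) (hs : 1 ≤ s)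
    (n : ℕ) (hn : 1 ≤ n) (hrank : Module.finrank F E = n)
    (g : F[X]) (hg : g.Monic) (hdeg : g.natDegree < n) (hg0 : g.coeff 0 ≠ 0)
    (α : E) (c : ℕ → E)
    (hc : (∑ i ∈ Finset.range (n * s), C (c i) * X ^ p ^ i) =
        (∑ i ∈ Finset.range (n * s),
            (C α * (g.sum fun j a => C (algebraMap F E a) * X ^ (Fintype.card F) ^ j)) ^ p ^ i)
          %ₘ (X ^ (Fintype.card E) - X)) :
    (c 0) ^ (Fintype.card F ^ g.natDegree) =
      algebraMap F E (g.coeff 0) * fqAct F (monicRecip g) α := by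
  have hp : p.Prime := Fact.out
  haveI : CharP E p := charP_of_injective_algebraMap (algebraMap F E).injective p
  haveI : ExpChar E p := ExpChar.prime hp
  set m := g.natDegree with hmdef
  set N := n * s with hNdef
  have hN : 0 < N := by positivity
  have hsm : s * m < N := by
    have h1 : s * (m + 1) ≤ s * n := Nat.mul_le_mul_left s (by omega)
    rw [Nat.mul_add, Nat.mul_one] at h1
    calc s * m < s * m + s := by omega
      _ ≤ s * n := h1
      _ = N := by rw [hNdef, Nat.mul_comm]
  have hQ : Fintype.card E = p ^ N := by
    rw [Module.card_eq_pow_finrank (K := F) (V := E), hrank, hq, ← pow_mul, Nat.mul_comm s n]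
  -- the linearized polynomial as a range sum
  have hL : (g.sum fun j b => C (algebraMap F E b) * X ^ (Fintype.card F) ^ j)
      = ∑ j ∈ Finset.range (m + 1),
          C (algebraMap F E (g.coeff j)) * X ^ p ^ (s * j) := by
    rw [g.sum_over_range' (fun i => by simp) (m + 1) (Nat.lt_succ_self m)]
    refine Finset.sum_congr rfl fun j _ => ?_
    rw [hq, ← pow_mul]
  -- the big sum expanded
  have hA : (∑ i ∈ Finset.range N,
        (C α * (g.sum fun j a => C (algebraMap F E a) * X ^ (Fintype.card F) ^ j)) ^ p ^ i)
      = ∑ i ∈ Finset.range N, ∑ j ∈ Finset.range (m + 1),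
          C ((α * algebraMap F E (g.coeff j)) ^ p ^ i) * X ^ p ^ (s * j + i) := by
    refine Finset.sum_congr rfl fun i _ => ?_
    rw [hL, Finset.mul_sum, sum_pow_char_pow]
    refine Finset.sum_congr rfl fun j _ => ?_
    rw [← mul_assoc, ← C_mul, mul_pow, ← C_pow, ← pow_mul, ← pow_add]
  set RR : E[X] := ∑ i ∈ Finset.range N, ∑ j ∈ Finset.range (m + 1),
      C ((α * algebraMap F E (g.coeff j)) ^ p ^ i) * X ^ p ^ ((s * j + i) % N) with hRRdef
  have hpN1 : 1 < p ^ N := Nat.one_lt_pow hN.ne' hp.one_lt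
  have hXlt : (X : E[X]).degree < ((X : E[X]) ^ p ^ N).degree := by
    rw [degree_X_pow, degree_X]
    exact_mod_cast hpN1
  have hMonic : (X ^ p ^ N - X : E[X]).Monic :=
    monic_X_pow_sub (by rw [degree_X]; exact_mod_cast hpN1)
  have hdegM : (X ^ p ^ N - X : E[X]).degree = (p ^ N : ℕ) := by
    rw [degree_sub_eq_left_of_degree_lt hXlt, degree_X_pow]
  have hdegRR : RR.degree < ((p ^ N : ℕ) : WithBot ℕ) := by
    rw [hRRdef]
    refine lt_of_le_of_lt (degree_sum_le _ _) ?_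
    rw [Finset.sup_lt_iff (by exact_mod_cast WithBot.bot_lt_coe (p ^ N : ℕ))]
    intro i _
    refine lt_of_le_of_lt (degree_sum_le _ _) ?_
    rw [Finset.sup_lt_iff (by exact_mod_cast WithBot.bot_lt_coe (p ^ N : ℕ))]
    intro j _
    refine lt_of_le_of_lt (degree_C_mul_X_pow_le _ _) ?_
    exact_mod_cast Nat.pow_lt_pow_right hp.one_lt (Nat.mod_lt _ hN)
  have hdvd : (X ^ p ^ N - X : E[X]) ∣
      (∑ i ∈ Finset.range N, ∑ j ∈ Finset.range (m + 1),
          C ((α * algebraMap F E (g.coeff j)) ^ p ^ i) * X ^ p ^ (s * j + i)) - RR := by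
    rw [hRRdef, ← Finset.sum_sub_distrib]
    refine Finset.dvd_sum fun i _ => ?_
    rw [← Finset.sum_sub_distrib]
    refine Finset.dvd_sum fun j _ => ?_
    rw [← mul_sub]
    exact Dvd.dvd.mul_left (aux_dvd p N hp E hN _) _
  have hc' : (∑ i ∈ Finset.range N, C (c i) * X ^ p ^ i) = RR := by
    rw [hc, hA, hQ]
    exact aux_mod_eq _ _ _ hMonic hdvd (hdegM ▸ hdegRR)
  -- extract c 0 as the coefficient of X^1
  have hcR : c 0 = RR.coeff 1 := by
    rw [← hc', finset_sum_coeff]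
    simp only [coeff_C_mul, coeff_X_pow, mul_ite, mul_one, mul_zero]
    rw [Finset.sum_eq_single_of_mem 0 (Finset.mem_range.mpr hN)]
    · rw [pow_zero, if_pos rfl]
    · intro i _ hne
      rw [if_neg (ne_of_lt (Nat.one_lt_pow hne hp.one_lt))]
  have hc0 : c 0 = ∑ j ∈ Finset.range (m + 1),
      (α * algebraMap F E (g.coeff j)) ^ p ^ ((N - s * j) % N) := by
    rw [hcR, hRRdef]
    simp only [finset_sum_coeff, coeff_C_mul, coeff_X_pow, mul_ite, mul_one, mul_zero]
    rw [Finset.sum_comm]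
    refine Finset.sum_congr rfl fun j hj => ?_
    have hj' : j ≤ m := Nat.lt_succ_iff.mp (Finset.mem_range.mp hj)
    have hsj : s * j < N := lt_of_le_of_lt (Nat.mul_le_mul_left s hj') hsm |>.trans_le le_rfl
    rw [Finset.sum_eq_single_of_mem ((N - s * j) % N)
        (Finset.mem_range.mpr (Nat.mod_lt _ hN))]
    · rw [if_pos]
      rw [aux_idx N (s * j) hN hsj, pow_zero]
    · intro i hi hne
      rw [if_neg]
      intro hcond
      have he : (s * j + i) % N = 0 := by
        by_contra h0
        exact absurd hcond.symm (ne_of_gt (Nat.one_lt_pow h0 hp.one_lt))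
      exact hne (aux_idx2 N (s * j) i hN hsj (Finset.mem_range.mp hi) he)
  -- raise to the q^m power
  have hmain : (c 0) ^ (Fintype.card F ^ m) = ∑ j ∈ Finset.range (m + 1),
      algebraMap F E (g.coeff j) * α ^ (Fintype.card F) ^ (m - j) := by
    have hqm : Fintype.card F ^ m = p ^ (s * m) := by rw [hq, ← pow_mul]
    rw [hqm, hc0, sum_pow_char_pow]
    refine Finset.sum_congr rfl fun j hj => ?_
    have hj' : j ≤ m := Nat.lt_succ_iff.mp (Finset.mem_range.mp hj)
    rw [← pow_mul, ← pow_add, aux_pow_red p N E hQ hN, aux_idx3 N s m j hN hj' hsm]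
    have hqmj : p ^ (s * (m - j)) = Fintype.card F ^ (m - j) := by rw [hq, ← pow_mul]
    rw [hqmj, mul_pow, ← map_pow, FiniteField.pow_card_pow, mul_comm]
  -- compute the right-hand side
  have hrhs : algebraMap F E (g.coeff 0) * fqAct F (monicRecip g) α
      = ∑ j ∈ Finset.range (m + 1),
          algebraMap F E (g.coeff (m - j)) * α ^ (Fintype.card F) ^ j := by
    rw [fqAct, monicRecip]
    have hlt : (C (g.coeff 0)⁻¹ * g.reverse).natDegree < m + 1 :=
      Nat.lt_succ_of_le (le_trans (natDegree_C_mul_le _ _) g.reverse_natDegree_le)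
    rw [Polynomial.sum_over_range' _ (fun i => by simp) (m + 1) hlt, Finset.mul_sum]
    refine Finset.sum_congr rfl fun j hj => ?_
    have hj' : j ≤ m := Nat.lt_succ_iff.mp (Finset.mem_range.mp hj)
    rw [coeff_C_mul, coeff_reverse, revAt_le (hmdef ▸ hj'), ← hmdef]
    rw [← mul_assoc, ← map_mul, mul_inv_cancel_left₀ hg0]
  rw [hmain, hrhs]
  rw [← Finset.sum_range_reflect]
  refine Finset.sum_congr rfl fun j hj => ?_
  have hj' : j ≤ m := Nat.lt_succ_iff.mp (Finset.mem_range.mp hj)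
  have e1 : m + 1 - 1 - j = m - j := by omega
  have e2 : m - (m - j) = j := by omega
  rw [e1, e2]
end
end

section
/- Let q = p^s, α ∈ F_{q^n}, and g ∈ F_q[x] monic of degree at most n-1 with g(0) ≠ 0. Then g ∘ χ_α is the trivial character if and only if g* ∘ α = 0, where g* is the monic reciprocal of g. -/
open Polynomial

noncomputable section

lemma exp_val_eq_one_iff (p : ℕ) [Fact p.Prime] (x : ZMod p) :
    Complex.exp (2 * Real.pi * Complex.I * ((x.val : ℕ) : ℂ) / p) = 1 ↔ x = 0 := by
  have hp : 0 < p := (Fact.out : p.Prime).pos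
  have hpc : (p : ℂ) ≠ 0 := Nat.cast_ne_zero.mpr hp.ne'
  have h2 : (2 * Real.pi * Complex.I : ℂ) ≠ 0 := by
    simp [Real.pi_ne_zero, Complex.I_ne_zero, Complex.ofReal_ne_zero]
  rw [Complex.exp_eq_one_iff]
  constructor
  · rintro ⟨k, hk⟩
    have hk' : (x.val : ℂ) = (k : ℂ) * p := by
      rw [div_eq_iff hpc] at hk
      have h3 : (2 * Real.pi * Complex.I : ℂ) * ((x.val : ℕ) : ℂ)
          = (2 * Real.pi * Complex.I : ℂ) * ((k : ℂ) * p) := by linear_combination hk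
      exact mul_left_cancel₀ h2 h3
    have hz : (x.val : ℤ) = k * p := by exact_mod_cast hk'
    have hdvd : p ∣ x.val := by
      have : (p:ℤ) ∣ (x.val : ℤ) := ⟨k, by linarith⟩
      exact_mod_cast this
    have := Nat.eq_zero_of_dvd_of_lt hdvd (x.val_lt)
    · exact (ZMod.val_eq_zero x).mp (by omega)
  · rintro rfl
    exact ⟨0, by simp⟩

lemma trace_pow_p_pow_s15 (p : ℕ) [Fact p.Prime] {E : Type*} [Field E] [Finite E]
    [Algebra (ZMod p) E] (k : ℕ) (x : E) :
    Algebra.trace (ZMod p) E (x ^ p ^ k) = Algebra.trace (ZMod p) E x := by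
  haveI : CharP E p := charP_of_injective_algebraMap (algebraMap (ZMod p) E).injective p
  haveI : ExpChar E p := .prime Fact.out
  let e : E ≃ₐ[ZMod p] E :=
    { iterateFrobeniusEquiv E p k with
      commutes' := fun c => by
        show iterateFrobeniusEquiv E p k _ = _
        rw [iterateFrobeniusEquiv_apply, iterateFrobenius_def, ← map_pow, ZMod.pow_card_pow] }
  have h := Algebra.trace_eq_of_algEquiv e x
  rwa [show e x = x ^ p ^ k from rfl] at h

theorem stdChar_act_trivial_iff
    (p : ℕ) [Fact p.Prime] (F : Type*) [Field F] [Fintype F] [CharP F p]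
    (E : Type*) [Field E] [Algebra F E] [Algebra (ZMod p) E]
    (n : ℕ) (hn : 1 ≤ n) (hrank : Module.finrank F E = n)
    (α : E) (g : F[X]) (hg : g.Monic) (hdeg : g.natDegree < n) (hg0 : g.coeff 0 ≠ 0) :
    (∀ β : E, stdChar p α (fqAct F g β) = 1) ↔ fqAct F (monicRecip g) α = 0 := by
  haveI : FiniteDimensional F E := FiniteDimensional.of_finrank_pos (by rw [hrank]; omega)
  haveI : Finite E := Module.finite_of_finite F
  haveI : Fintype E := Fintype.ofFinite E
  haveI : CharP E p := charP_of_injective_algebraMap (algebraMap (ZMod p) E).injective p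
  haveI : ExpChar E p := .prime Fact.out
  set q := Fintype.card F with hqdef
  obtain ⟨s, hps, hq⟩ := FiniteField.card F p
  set d := g.natDegree with hddef
  have hdn : d ≤ n := hdeg.le
  have hcardE : Fintype.card E = q ^ n := by
    rw [← hrank, Module.card_fintype (Module.finBasis F E)]
    simp
    rfl
  have hpowE : ∀ x : E, x ^ q ^ n = x := fun x => by
    rw [← hcardE]; exact FiniteField.pow_card x
  have htrq : ∀ (k : ℕ) (x : E),
      Algebra.trace (ZMod p) E (x ^ q ^ k) = Algebra.trace (ZMod p) E x := by
    intro k x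
    have hqk : q ^ k = p ^ ((s : ℕ) * k) := by rw [hqdef, hq, ← pow_mul]
    rw [hqk]; exact trace_pow_p_pow_s15 p _ x
  set δ : E := ∑ i ∈ Finset.range (d+1), algebraMap F E (g.coeff i) * α ^ q ^ (n - i)
    with hδdef
  have hfq : ∀ (h : F[X]) (x : E), h.natDegree < d + 1 →
      fqAct F h x = ∑ i ∈ Finset.range (d+1), algebraMap F E (h.coeff i) * x ^ q ^ i := by
    intro h x hh
    exact Polynomial.sum_over_range' h (by simp) (d+1) hh
  have key : ∀ β : E, Algebra.trace (ZMod p) E (α * fqAct F g β)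
      = Algebra.trace (ZMod p) E (δ * β) := by
    intro β
    rw [hfq g β (lt_add_one _), Finset.mul_sum, map_sum, hδdef, Finset.sum_mul, map_sum]
    refine Finset.sum_congr rfl fun i hi => ?_
    have hid : i ≤ d := Nat.lt_succ_iff.mp (Finset.mem_range.mp hi)
    have hin : i ≤ n := hid.trans hdn
    have h1 := htrq (n - i) (α * (algebraMap F E (g.coeff i) * β ^ q ^ i))
    rw [mul_pow, mul_pow, ← map_pow, FiniteField.pow_card_pow, ← pow_mul, ← pow_add,
      Nat.add_sub_cancel' hin, hpowE] at h1
    rw [← h1]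
    congr 1
    ring
  have hε : algebraMap F E (g.coeff 0) * fqAct F (monicRecip g) α
      = ∑ i ∈ Finset.range (d+1), algebraMap F E (g.coeff i) * α ^ q ^ (d - i) := by
    have hrecipdeg : (monicRecip g).natDegree < d + 1 := by
      refine Nat.lt_succ_of_le ?_
      calc (C (g.coeff 0)⁻¹ * g.reverse).natDegree
          ≤ g.reverse.natDegree := natDegree_C_mul_le _ _
        _ ≤ d := g.reverse_natDegree_le
    rw [hfq _ _ hrecipdeg, Finset.mul_sum,
      ← Finset.sum_range_reflect (fun i => algebraMap F E (g.coeff i) * α ^ q ^ (d - i)) (d+1)]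
    refine Finset.sum_congr rfl fun i hi => ?_
    have hid : i ≤ d := Nat.lt_succ_iff.mp (Finset.mem_range.mp hi)
    simp only [Nat.add_sub_cancel]
    rw [Nat.sub_sub_self hid, monicRecip, coeff_C_mul, coeff_reverse, revAt_le hid,
      ← mul_assoc, ← map_mul, ← mul_assoc, mul_inv_cancel₀ hg0, one_mul]
  have hδε : δ = (algebraMap F E (g.coeff 0) * fqAct F (monicRecip g) α) ^ q ^ (n - d) := by
    rw [hε]
    have hqnd : q ^ (n - d) = p ^ ((s : ℕ) * (n - d)) := by rw [hqdef, hq, ← pow_mul]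
    rw [hqnd, sum_pow_char_pow, hδdef]
    refine Finset.sum_congr rfl fun i hi => ?_
    have hid : i ≤ d := Nat.lt_succ_iff.mp (Finset.mem_range.mp hi)
    rw [← hqnd, mul_pow, ← map_pow, FiniteField.pow_card_pow, ← pow_mul, ← pow_add]
    have he : d - i + (n - d) = n - i := by omega
    rw [he]
  have hiff : δ = 0 ↔ fqAct F (monicRecip g) α = 0 := by
    constructor
    · intro h
      rw [hδε, pow_eq_zero_iff (pow_ne_zero _ Fintype.card_ne_zero)] at h
      rcases mul_eq_zero.mp h with h' | h'
      · exact absurd ((_root_.map_eq_zero (algebraMap F E)).mp h') hg0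
      · exact h'
    · intro h
      rw [hδε, h, mul_zero, zero_pow (pow_ne_zero _ Fintype.card_ne_zero)]
  constructor
  · intro hchar
    refine hiff.mp ?_
    apply (traceForm_nondegenerate (ZMod p) E).1 δ
    intro β
    rw [Algebra.traceForm_apply, ← key β]
    exact (exp_val_eq_one_iff p _).mp (hchar β)
  · intro h0 β
    have hδ0 : δ = 0 := hiff.mpr h0
    refine (exp_val_eq_one_iff p _).mpr ?_
    rw [key β, hδ0, zero_mul, map_zero]
end
end
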